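/- arXiv:1303.4234 — 3 statements merged into one kernel-verified Lean document; each statement's English description precedes it below -/
import Mathlib

section
/- Let L_n be a chain on n elements and 2 ≤ t ≤ n. Then the Krull dimension of S/I_t(L_n) equals n − ⌊n/t⌋. -/
open MvPolynomial

noncomputable section
/-- The height of an ideal: the infimum of the heights of the primes containing it. -/
def idealHeight {R : Type*} [CommRing R] (I : Ideal R) : ℕ∞ :=
  ⨅ (p : PrimeSpectrum R) (_ : I ≤ p.asIdeal), Order.height p

/-- The depth of `S/I` over `S = k[x_i]` with respect to the irrelevant maximal ideal:
the supremum of the lengths of regular sequences on `S/I` consisting of elements of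
the ideal generated by the variables. -/
def quotDepth (k : Type) [Field k] (σ : Type) (I : Ideal (MvPolynomial σ k)) : ℕ :=
  sSup {d : ℕ | ∃ rs : List (MvPolynomial σ k), rs.length = d ∧
    (∀ x ∈ rs, x ∈ Ideal.span (Set.range (X : σ → MvPolynomial σ k))) ∧
    RingTheory.Sequence.IsRegular (MvPolynomial σ k ⧸ I) rs}
/-- The path ideal `I_t(L_n)` of the chain `x_1 < ⋯ < x_n`: generated by the products
of `t` consecutive variables. -/
def chainPathIdeal (k : Type) [Field k] (n t : ℕ) : Ideal (MvPolynomial (Fin n) k) :=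
  Ideal.span {f | ∃ i : ℕ, ∃ h : i + t ≤ n,
    f = ∏ j : Fin t, X (⟨i + j.1, Nat.lt_of_lt_of_le (Nat.add_lt_add_left j.2 i) h⟩ : Fin n)}

/-!
Every prime `p ⊇ I_t(L_n)` contains a variable from each of the `⌊n/t⌋` disjoint windows
`{a t, …, a t + t - 1}`, so it contains the ideal generated by at least `⌊n/t⌋` variables;
the quotient by that ideal is a polynomial ring in at most `n - ⌊n/t⌋` variables, and it surjects
onto `S/p`. Conversely, every window of `t` consecutive indices contains a multiple of `t`, so
`I_t(L_n)` lies in the prime generated by the `⌊n/t⌋` variables `x_i` with `t ∣ i`, whose quotient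
has dimension exactly `n - ⌊n/t⌋`. In the code variables are indexed from `0`, so this set of
indices reads `t ∣ i + 1`.
-/

namespace MvPolynomial

variable {σ τ R : Type*} [CommRing R]

theorem ker_killCompl {f : σ → τ} (hf : Function.Injective f) :
    RingHom.ker (killCompl (R := R) hf) = Ideal.span (X '' (Set.range f)ᶜ) := by
  ext p
  rw [RingHom.mem_ker, mem_ideal_span_X_image, ← support_eq_empty, support_killCompl]
  simp only [Finset.eq_empty_iff_forall_notMem, Finset.mem_preimage]
  refine ⟨fun h m hm => ?_, fun h s hs => ?_⟩
  · have : m ∉ Set.range (Finsupp.mapDomain f) := fun ⟨s, hs⟩ => h s (hs ▸ hm)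
    rw [Finsupp.mem_range_mapDomain_iff f hf] at this
    push Not at this
    exact this
  · obtain ⟨i, hi, hsi⟩ := h _ hs
    exact hsi ((Finsupp.mem_range_mapDomain_iff f hf _).mp ⟨s, rfl⟩ i hi)

def quotientSpanXImageAlgEquiv (s : Set σ) :
    (MvPolynomial σ R ⧸ Ideal.span (X '' s : Set (MvPolynomial σ R))) ≃ₐ[R] MvPolynomial ↥sᶜ R :=
  (Ideal.quotientEquivAlgOfEq R (by rw [ker_killCompl, Subtype.range_coe, compl_compl])).trans
    (Ideal.quotientKerAlgEquivOfSurjective (f := killCompl (R := R) Subtype.val_injective)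
      fun p => ⟨rename Subtype.val p, killCompl_rename_app _ p⟩)

theorem ringKrullDim_quotient_span_X_image [IsNoetherianRing R] [Finite σ] (s : Set σ) :
    ringKrullDim (MvPolynomial σ R ⧸ Ideal.span (X '' s : Set (MvPolynomial σ R)))
      = ringKrullDim R + sᶜ.ncard := by
  rw [ringKrullDim_eq_of_ringEquiv (quotientSpanXImageAlgEquiv s).toRingEquiv,
    ringKrullDim_of_isNoetherianRing, Nat.card_coe_set_eq]

end MvPolynomial

theorem ringKrullDim_quotient_le_of_forall_isPrime {R : Type*} [CommRing R] {I : Ideal R}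
    {d : WithBot ℕ∞} (h : ∀ p : Ideal R, p.IsPrime → I ≤ p → ringKrullDim (R ⧸ p) ≤ d) :
    ringKrullDim (R ⧸ I) ≤ d := by
  rw [ringKrullDim_quotient]
  refine iSup_le fun l => ?_
  have hd := h _ l.head.1.2 l.head.2
  rw [ringKrullDim_quotient] at hd
  refine le_trans ?_ hd
  let l' : LTSeries (PrimeSpectrum.zeroLocus (R := R) l.head.1.asIdeal) :=
    LTSeries.mk l.length (fun i => ⟨(l i).1, (PrimeSpectrum.mem_zeroLocus _ _).mpr (l.head_le i)⟩)
      fun _ _ hij => l.strictMono hij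
  exact Order.LTSeries.length_le_krullDim l'

section chainPathIdeal

variable {k : Type} [Field k] {n t : ℕ}

theorem ringKrullDim_quotient_span_X_image_fin (s : Set (Fin n)) :
    ringKrullDim (MvPolynomial (Fin n) k ⧸ Ideal.span (X '' s : Set (MvPolynomial (Fin n) k)))
      = (n - s.ncard : ℕ) := by
  rw [MvPolynomial.ringKrullDim_quotient_span_X_image, ringKrullDim_eq_zero_of_field, zero_add,
    Set.ncard_compl, Nat.card_fin]

theorem ncard_setOf_dvd_succ : {i : Fin n | t ∣ i + 1}.ncard = n / t := by
  rw [← Set.ncard_image_of_injective _ (f := fun i : Fin n => (i : ℕ) + 1)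
      fun i j h => Fin.ext (by simpa using h),
    ← Nat.Ioc_filter_dvd_card_eq_div, ← Set.ncard_coe_finset]
  congr 1
  ext x
  simp only [Set.mem_image, Set.mem_ofPred_eq, Finset.coe_filter, Finset.mem_Ioc]
  constructor
  · rintro ⟨i, hi, rfl⟩
    exact ⟨⟨i.1.succ_pos, i.2⟩, hi⟩
  · rintro ⟨⟨hx0, hxn⟩, hx⟩
    exact ⟨⟨x - 1, by omega⟩, by simpa [Nat.sub_add_cancel hx0] using hx, by simp; omega⟩

theorem chainPathIdeal_le_span_X_setOf_dvd_succ (ht : 0 < t) :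
    chainPathIdeal k n t ≤ Ideal.span (X '' {i : Fin n | t ∣ i + 1}) := by
  rw [chainPathIdeal, Ideal.span_le]
  rintro _ ⟨i, hi, rfl⟩
  have hmod := Nat.mod_lt i ht
  refine Ideal.prod_mem _ (Finset.mem_univ ⟨t - 1 - i % t, by omega⟩)
    (Ideal.subset_span ⟨_, ?_, rfl⟩)
  -- `i + (t - 1 - i % t) + 1 = t * (i / t + 1)`
  refine ⟨i / t + 1, ?_⟩
  have := Nat.div_add_mod i t
  simp only
  rw [Nat.mul_add]
  omega

theorem div_le_ncard_setOf_X_mem (p : Ideal (MvPolynomial (Fin n) k)) [p.IsPrime]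
    (hp : chainPathIdeal k n t ≤ p) : n / t ≤ {i : Fin n | X i ∈ p}.ncard := by
  have hwindow : ∀ a < n / t, ∃ i : Fin n, X i ∈ p ∧ (i : ℕ) / t = a := by
    intro a ha
    have ht : 0 < t := Nat.pos_of_ne_zero fun h => by simp [h] at ha
    have han : a * t + t ≤ n := by
      have := (Nat.le_div_iff_mul_le ht).mp ha
      rwa [Nat.succ_mul] at this
    obtain ⟨j, -, hj⟩ := Ideal.IsPrime.prod_mem_iff.mp (hp (Ideal.subset_span ⟨a * t, han, rfl⟩))
    exact ⟨_, hj, Nat.div_eq_of_lt_le (by simp) (by simp [Nat.succ_mul])⟩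
  calc n / t = (Set.Iio (n / t)).ncard := (Set.ncard_Iio_nat _).symm
    _ ≤ ((fun i : Fin n => (i : ℕ) / t) '' {i | X i ∈ p}).ncard :=
      Set.ncard_le_ncard fun a ha => by simpa [and_comm] using hwindow a ha
    _ ≤ _ := Set.ncard_image_le

end chainPathIdeal

theorem krullDim_quot_pathIdeal_chain_general (k : Type) [Field k] (n t : ℕ) (ht : 2 ≤ t) :
    ringKrullDim (MvPolynomial (Fin n) k ⧸ chainPathIdeal k n t)
      = ((n - n / t : ℕ) : WithBot ℕ∞) := by
  refine le_antisymm (ringKrullDim_quotient_le_of_forall_isPrime fun p _ hp => ?_) ?_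
  · calc ringKrullDim (MvPolynomial (Fin n) k ⧸ p)
        ≤ ringKrullDim (MvPolynomial (Fin n) k ⧸
            Ideal.span (X '' {i : Fin n | X i ∈ p} : Set (MvPolynomial (Fin n) k))) :=
          ringKrullDim_le_of_surjective _ (Ideal.Quotient.factor_surjective
            (Ideal.span_le.mpr (by rintro _ ⟨i, hi, rfl⟩; exact hi)))
      _ ≤ _ := by
          rw [ringKrullDim_quotient_span_X_image_fin]
          exact_mod_cast Nat.sub_le_sub_left (div_le_ncard_setOf_X_mem p hp) n
  · calc ((n - n / t : ℕ) : WithBot ℕ∞)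
        = ringKrullDim (MvPolynomial (Fin n) k ⧸
            Ideal.span (X '' {i : Fin n | t ∣ i + 1} : Set (MvPolynomial (Fin n) k))) := by
          rw [ringKrullDim_quotient_span_X_image_fin, ncard_setOf_dvd_succ]
      _ ≤ _ := ringKrullDim_le_of_surjective _ (Ideal.Quotient.factor_surjective
            (chainPathIdeal_le_span_X_setOf_dvd_succ (by omega)))

/-- The Krull dimension of `S/I_t(L_n)` equals `n - ⌊n/t⌋`. -/
theorem krullDim_quot_pathIdeal_chain (k : Type) [Field k] (n t : ℕ) (ht : 2 ≤ t)
    (htn : t ≤ n) :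
    ringKrullDim (MvPolynomial (Fin n) k ⧸ chainPathIdeal k n t)
      = ((n - n / t : ℕ) : WithBot ℕ∞) :=
  krullDim_quot_pathIdeal_chain_general k n t ht
end
end

section
/- Let P be a tree poset (a poset whose Hasse diagram is a tree as an undirected graph and which contains no pencil subposet). Then there exists a maximal saturated chain L in P such that either the maximal element of L or the minimal element of L belongs to no other maximal saturated chain of P. -/
open MvPolynomial

noncomputable section
/-- A saturated chain in a poset, as a list of elements in which each element is
covered by the next. -/
def IsSatChain {P : Type*} [PartialOrder P] (l : List P) : Prop := l.Chain' (· ⋖ ·)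

/-- A maximal saturated chain: a saturated chain starting at a minimal element and
ending at a maximal element. -/
def IsMaxSatChain {P : Type*} [PartialOrder P] (l : List P) : Prop :=
  IsSatChain l ∧ (∃ a, l.head? = some a ∧ IsMin a) ∧ (∃ b, l.getLast? = some b ∧ IsMax b)

/-- The path ideal `I_t(P)`: generated by the products of the vertices of all
saturated chains with `t` elements. -/
def pathIdeal (k : Type) [Field k] (P : Type) [PartialOrder P] (t : ℕ) :
    Ideal (MvPolynomial P k) :=
  Ideal.span {f | ∃ l : List P, l.length = t ∧ IsSatChain l ∧ f = (l.map X).prod}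
/-- The Hasse diagram of a poset, as an undirected simple graph. -/
def hasse (P : Type*) [PartialOrder P] : SimpleGraph P := SimpleGraph.fromRel (· ⋖ ·)

/-- A poset contains a pencil: a disjoint union `X ∪ {z} ∪ Y` with `|X|,|Y| ≥ 2`,
`x < z < y` for all `x ∈ X`, `y ∈ Y`, and `X`, `Y` antichains. -/
def HasPencil (P : Type*) [PartialOrder P] : Prop :=
  ∃ (z : P) (Xs Ys : Set P), Xs.Nontrivial ∧ Ys.Nontrivial ∧
    (∀ x ∈ Xs, x < z) ∧ (∀ y ∈ Ys, z < y) ∧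
    IsAntichain (· ≤ ·) Xs ∧ IsAntichain (· ≤ ·) Ys

/-- A tree poset: the Hasse diagram is a tree as an undirected graph and there is
no pencil subposet. -/
def IsTreePoset (P : Type*) [PartialOrder P] : Prop := (hasse P).IsTree ∧ ¬ HasPencil P

/-- A forest poset: a disjoint union of tree posets, i.e. the Hasse diagram is acyclic
and there is no pencil subposet. -/
def IsForestPoset (P : Type*) [PartialOrder P] : Prop :=
  (hasse P).IsAcyclic ∧ ¬ HasPencil P

/-!
Call a minimal element *lonely* if exactly one maximal element lies above it. It suffices to
find a lonely minimal element of `P` or of `Pᵒᵈ`: the Hasse diagram being acyclic, a saturated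
chain is determined by its endpoints, so the chain from a lonely minimum `a` up to its maximum
is the only maximal chain through `a`.

Lonely extremes are found by induction on `|P|`, deleting a leaf `v` of the Hasse diagram. Up to
duality `v` covers its neighbour `u`, so `v` is maximal and everything below `v` lies below `u`.
A lonely extreme of `P \ {v}` gives one of `P` (with `v` in place of `u` if needed), except when
a lonely minimum `a ≤ u` of `P \ {v}` lies below a maximum `b ≠ u`. Then `u` lies below the two
maximal elements `v` and `b`, so the absence of pencils leaves a single minimal element below
`u`, and `v` is lonely in `Pᵒᵈ`.
-/

open OrderDual

lemma SimpleGraph.IsAcyclic.eq_of_isChain_adj {V : Type*} {G : SimpleGraph V} (hG : G.IsAcyclic)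
    {l₁ l₂ : List V} (h₁ : l₁.IsChain G.Adj) (h₂ : l₂.IsChain G.Adj) (hd₁ : l₁.Nodup)
    (hd₂ : l₂.Nodup) (hhead : l₁.head? = l₂.head?) (hlast : l₁.getLast? = l₂.getLast?) :
    l₁ = l₂ := by
  rcases eq_or_ne l₁ [] with rfl | hne₁
  · simpa [eq_comm] using hhead
  have hne₂ : l₂ ≠ [] := by rintro rfl; simp_all
  have hh : l₂.head hne₂ = l₁.head hne₁ := by
    simpa [List.head?_eq_some_head hne₁, List.head?_eq_some_head hne₂] using hhead.symm
  have hl : l₂.getLast hne₂ = l₁.getLast hne₁ := by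
    simpa [List.getLast?_eq_some_getLast hne₁, List.getLast?_eq_some_getLast hne₂] using
      hlast.symm
  let p₁ : G.Path _ _ := ⟨.ofSupport l₁ hne₁ h₁, by
    rwa [SimpleGraph.Walk.isPath_def, SimpleGraph.Walk.support_ofSupport]⟩
  let p₂ : G.Path _ _ := ⟨(SimpleGraph.Walk.ofSupport l₂ hne₂ h₂).copy hh hl, by
    rwa [SimpleGraph.Walk.isPath_def, SimpleGraph.Walk.support_copy,
      SimpleGraph.Walk.support_ofSupport]⟩
  simpa [p₁, p₂] using congrArg (fun p => p.1.support) ((hG.subsingleton_path _ _).elim p₁ p₂)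

lemma List.head?_eq_of_pairwise {α : Type*} {r : α → α → Prop} {l : List α} (hl : l.Pairwise r)
    {x : α} (hx : x ∈ l) (hmin : ∀ y, ¬ r y x) : l.head? = some x := by
  obtain _ | ⟨c, t⟩ := l
  · simp at hx
  · rcases List.mem_cons.1 hx with rfl | hxt
    · rfl
    · exact absurd (List.rel_of_pairwise_cons hl hxt) (hmin c)

section

variable {P : Type*} [PartialOrder P]

lemma hasse_eq_simpleGraph_hasse : hasse P = SimpleGraph.hasse P := by
  ext x y
  rw [hasse, SimpleGraph.fromRel_adj, SimpleGraph.hasse_adj, and_iff_right_iff_imp]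
  rintro (h | h)
  exacts [h.ne, h.ne']

lemma hasse_adj {x y : P} : (hasse P).Adj x y ↔ x ⋖ y ∨ y ⋖ x := by
  rw [hasse_eq_simpleGraph_hasse, SimpleGraph.hasse_adj]

lemma hasse_subtype_eq_induce {s : Set P} (hs : s.OrdConnected) :
    hasse s = (hasse P).induce s := by
  ext x y
  have hcov : ∀ a b : s, (a : P) ⋖ b ↔ a ⋖ b := fun _ _ =>
    Set.OrdConnected.apply_covBy_apply_iff (OrderEmbedding.subtype (· ∈ s)) (by simpa using hs)
  simp only [hasse_adj, SimpleGraph.induce_adj, hcov]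

lemma HasPencil.map {Q : Type*} [PartialOrder Q] (f : P ↪o Q) : HasPencil P → HasPencil Q
  | ⟨z, X, Y, hX, hY, hXz, hzY, hXa, hYa⟩ =>
    ⟨f z, f '' X, f '' Y, hX.image f.injective, hY.image f.injective,
      Set.forall_mem_image.2 fun x hx => f.lt_iff_lt.2 (hXz x hx),
      Set.forall_mem_image.2 fun y hy => f.lt_iff_lt.2 (hzY y hy),
      hXa.image_embedding f, hYa.image_embedding f⟩

lemma HasPencil.ofDual : HasPencil Pᵒᵈ → HasPencil P
  | ⟨z, X, Y, hX, hY, hXz, hzY, hXa, hYa⟩ => ⟨z, Y, X, hY, hX, hzY, hXz, hYa.swap, hXa.swap⟩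

lemma eq_of_isMin_of_not_hasPencil (hnp : ¬ HasPencil P) {a₁ a₂ z b₁ b₂ : P}
    (ha₁ : IsMin a₁) (ha₂ : IsMin a₂) (h₁ : a₁ ≤ z) (h₂ : a₂ ≤ z)
    (hb₁ : IsMax b₁) (hb₂ : IsMax b₂) (hb : b₁ ≠ b₂) (hz₁ : z < b₁) (hz₂ : z < b₂) :
    a₁ = a₂ := by
  by_contra hne
  have hlt₁ : a₁ < z := h₁.lt_of_ne fun h => hne (ha₁.eq_of_ge (h ▸ h₂))
  have hlt₂ : a₂ < z := h₂.lt_of_ne fun h => hne (ha₂.eq_of_le (h ▸ h₁))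
  refine hnp ⟨z, {a₁, a₂}, {b₁, b₂}, Set.nontrivial_pair hne, Set.nontrivial_pair hb,
    by simp [hlt₁, hlt₂], by simp [hz₁, hz₂], ?_, ?_⟩
  · exact (setOfPred_minimal_antichain fun _ => True).subset
      (by simp [Set.insert_subset_iff, ha₁, ha₂])
  · exact (setOfPred_maximal_antichain fun _ => True).subset
      (by simp [Set.insert_subset_iff, hb₁, hb₂])

lemma IsTreePoset.dual (hP : IsTreePoset P) : IsTreePoset Pᵒᵈ := by
  rw [IsTreePoset, hasse_eq_simpleGraph_hasse, SimpleGraph.hasseDualIso.isTree_iff,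
    ← hasse_eq_simpleGraph_hasse]
  exact ⟨hP.1, fun h => hP.2 h.ofDual⟩

lemma IsTreePoset.compl_singleton [Nontrivial P] {v : P} (hP : IsTreePoset P) (hv : IsMax v)
    (hleaf : ((hasse P).neighborSet v).Subsingleton) : IsTreePoset ({v}ᶜ : Set P) := by
  have hs : ({v}ᶜ : Set P).OrdConnected :=
    (isLowerSet_compl.2 fun _ _ hvb hv' => (hv.eq_of_le (hv' ▸ hvb)).symm).ordConnected
  obtain ⟨w, hw⟩ := exists_ne v
  refine ⟨⟨?_, ?_⟩, fun h => hP.2 (h.map (OrderEmbedding.subtype _))⟩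
  · rw [hasse_subtype_eq_induce hs, SimpleGraph.connected_iff]
    refine ⟨hP.1.connected.preconnected.induce_of_degree_eq_one ?_, ⟨⟨w, hw⟩⟩⟩
    simpa using hleaf
  · rw [hasse_subtype_eq_induce hs]
    exact hP.1.isAcyclic.induce _

lemma exists_le_isMax [Finite P] (x : P) : ∃ b, x ≤ b ∧ IsMax b := by
  simpa using Finite.exists_le_maximal (p := fun _ : P => True) trivial

lemma exists_isMin_le [Finite P] (x : P) : ∃ a, a ≤ x ∧ IsMin a := by
  simpa using Finite.exists_le_minimal (p := fun _ : P => True) trivial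

namespace IsSatChain

variable {l : List P}

lemma pairwise_lt (hl : IsSatChain l) : l.Pairwise (· < ·) :=
  List.isChain_iff_pairwise.1 (hl.imp fun _ _ h => h.lt)

lemma head?_eq_of_isMin (hl : IsSatChain l) {a : P} (ha : IsMin a) (hal : a ∈ l) :
    l.head? = some a :=
  List.head?_eq_of_pairwise hl.pairwise_lt hal fun _ => ha.not_lt

lemma getLast?_eq_of_isMax (hl : IsSatChain l) {b : P} (hb : IsMax b) (hbl : b ∈ l) :
    l.getLast? = some b := by
  rw [← List.head?_reverse]
  exact List.head?_eq_of_pairwise (List.pairwise_reverse.2 hl.pairwise_lt)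
    (List.mem_reverse.2 hbl) fun _ => hb.not_lt

lemma le_of_head?_of_getLast? (hl : IsSatChain l) {a b : P} (ha : l.head? = some a)
    (hb : l.getLast? = some b) : a ≤ b := by
  obtain ⟨t, rfl⟩ := List.head?_eq_some_iff.1 ha
  rcases List.mem_cons.1 (List.mem_of_getLast? hb) with rfl | hbt
  exacts [le_rfl, (List.rel_of_pairwise_cons hl.pairwise_lt hbt).le]

lemma eq_of_head?_eq_of_getLast?_eq (hac : (hasse P).IsAcyclic) {l' : List P}
    (hl : IsSatChain l) (hl' : IsSatChain l') (hhead : l.head? = l'.head?)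
    (hlast : l.getLast? = l'.getLast?) : l = l' :=
  hac.eq_of_isChain_adj (hl.imp fun _ _ h => hasse_adj.2 (.inl h))
    (hl'.imp fun _ _ h => hasse_adj.2 (.inl h)) (hl.pairwise_lt.imp ne_of_lt)
    (hl'.pairwise_lt.imp ne_of_lt) hhead hlast

end IsSatChain

lemma exists_isSatChain [Finite P] {a b : P} (hab : a ≤ b) :
    ∃ l, IsSatChain l ∧ l.head? = some a ∧ l.getLast? = some b := by
  induction a using WellFoundedGT.induction with
  | _ a ih =>
  rcases hab.eq_or_lt with rfl | hlt
  · exact ⟨[a], List.isChain_singleton a, rfl, rfl⟩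
  · obtain ⟨c, hac, hcb⟩ := exists_covBy_le_of_lt hlt
    obtain ⟨l, hl, hhead, hlast⟩ := ih c hac.lt hcb
    obtain ⟨t, rfl⟩ := List.head?_eq_some_iff.1 hhead
    exact ⟨a :: c :: t, List.isChain_cons_cons.2 ⟨hac, hl⟩, rfl, by simpa using hlast⟩

lemma exists_private_isMaxSatChain_of_isMin [Finite P] (hac : (hasse P).IsAcyclic) {a : P}
    (ha : IsMin a) (huniq : ∃! b, IsMax b ∧ a ≤ b) :
    ∃ l, IsMaxSatChain l ∧ l.head? = some a ∧ ∀ l', IsMaxSatChain l' → a ∈ l' → l' = l := by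
  obtain ⟨b, ⟨hb, hab⟩, hb_uniq⟩ := huniq
  obtain ⟨l, hl, hhead, hlast⟩ := exists_isSatChain hab
  refine ⟨l, ⟨hl, ⟨a, hhead, ha⟩, b, hlast, hb⟩, hhead, ?_⟩
  rintro l' ⟨hl', -, b', hlast', hb'⟩ hal'
  have hhead' := hl'.head?_eq_of_isMin ha hal'
  obtain rfl := hb_uniq b' ⟨hb', hl'.le_of_head?_of_getLast? hhead' hlast'⟩
  exact hl'.eq_of_head?_eq_of_getLast?_eq hac hl (hhead'.trans hhead.symm)
    (hlast'.trans hlast.symm)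

lemma exists_private_isMaxSatChain_of_isMax [Finite P] (hac : (hasse P).IsAcyclic) {b : P}
    (hb : IsMax b) (huniq : ∃! a, IsMin a ∧ a ≤ b) :
    ∃ l, IsMaxSatChain l ∧ l.getLast? = some b ∧ ∀ l', IsMaxSatChain l' → b ∈ l' → l' = l := by
  obtain ⟨a, ⟨ha, hab⟩, ha_uniq⟩ := huniq
  obtain ⟨l, hl, hhead, hlast⟩ := exists_isSatChain hab
  refine ⟨l, ⟨hl, ⟨a, hhead, ha⟩, b, hlast, hb⟩, hlast, ?_⟩
  rintro l' ⟨hl', ⟨a', hhead', ha'⟩, -⟩ hbl'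
  have hlast' := hl'.getLast?_eq_of_isMax hb hbl'
  obtain rfl := ha_uniq a' ⟨ha', hl'.le_of_head?_of_getLast? hhead' hlast'⟩
  exact hl'.eq_of_head?_eq_of_getLast?_eq hac hl (hhead'.trans hhead.symm)
    (hlast'.trans hlast.symm)

def HasLonelyMin (P : Type*) [PartialOrder P] : Prop :=
  ∃ a : P, IsMin a ∧ ∃! b : P, IsMax b ∧ a ≤ b

lemma hasLonelyMin_dual_iff :
    HasLonelyMin Pᵒᵈ ↔ ∃ b : P, IsMax b ∧ ∃! a : P, IsMin a ∧ a ≤ b :=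
  Iff.rfl

section Leaf

variable {u v : P}

lemma isMax_of_leaf [Finite P] (huv : u ⋖ v) (hleaf : ∀ w, (hasse P).Adj v w → w = u) :
    IsMax v := by
  intro t hvt
  by_contra hnt
  obtain ⟨c, hvc, -⟩ := exists_covBy_le_of_lt (lt_of_le_not_ge hvt hnt)
  obtain rfl := hleaf c (hasse_adj.2 (.inl hvc))
  exact lt_asymm hvc.lt huv.lt

lemma le_of_lt_of_leaf [Finite P] (hleaf : ∀ w, (hasse P).Adj v w → w = u) {t : P}
    (ht : t < v) : t ≤ u := by
  obtain ⟨c, htc, hcv⟩ := exists_le_covBy_of_lt ht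
  exact hleaf c (hasse_adj.2 (.inr hcv)) ▸ htc

lemma IsMin.le_iff_le_of_forall_lt_le (huv : u < v) (hbelow : ∀ t < v, t ≤ u) {a : P}
    (ha : IsMin a) : a ≤ v ↔ a ≤ u :=
  ⟨fun hav => hbelow a (hav.lt_of_ne fun h => (h ▸ ha) huv.le |>.not_gt huv),
    fun hau => hau.trans huv.le⟩

lemma hasLonelyMin_dual_of_existsUnique (hv : IsMax v) (huv : u < v)
    (hbelow : ∀ t < v, t ≤ u) (h : ∃! a, IsMin a ∧ a ≤ u) : HasLonelyMin Pᵒᵈ :=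
  hasLonelyMin_dual_iff.2 ⟨v, hv, (existsUnique_congr fun _ =>
    and_congr_right fun ha => ha.le_iff_le_of_forall_lt_le huv hbelow).2 h⟩

lemma isMin_val_of_compl (hv : IsMax v) {x : ({v}ᶜ : Set P)} (hx : IsMin x) : IsMin (x : P) :=
  fun t ht => @hx ⟨t, fun htv => x.2 (hv.eq_of_le (htv ▸ ht)).symm⟩ ht

lemma isMax_val_of_compl (huv : u < v) (hbelow : ∀ t < v, t ≤ u) {x : ({v}ᶜ : Set P)}
    (hx : IsMax x) (hxu : (x : P) ≠ u) : IsMax (x : P) := by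
  intro t hxt
  by_cases htv : t = v
  · subst htv
    have hxu' : (x : P) ≤ u := hbelow x (hxt.lt_of_ne x.2)
    exact absurd (le_antisymm hxu' (hx (show x ≤ ⟨u, huv.ne⟩ from hxu'))) hxu
  · exact hx (show x ≤ ⟨t, htv⟩ from hxt)

lemma hasLonelyMin_or_dual_of_compl [Finite P] (hnp : ¬ HasPencil P) (hv : IsMax v)
    (huv : u < v) (hbelow : ∀ t < v, t ≤ u) (h : HasLonelyMin ({v}ᶜ : Set P)) :
    HasLonelyMin P ∨ HasLonelyMin Pᵒᵈ := by
  obtain ⟨a, ha, b, ⟨hb, hab⟩, hb_uniq⟩ := h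
  have ha' := isMin_val_of_compl hv ha
  have huniq : ∀ y : P, IsMax y → (a : P) ≤ y → y ≠ v → y = b := fun y hy hay hyv =>
    congrArg Subtype.val (hb_uniq ⟨y, hyv⟩ ⟨fun _ ht => hy ht, hay⟩)
  by_cases hau : (a : P) ≤ u
  · by_cases hbu : (b : P) = u
    · refine .inl ⟨a, ha', v, ⟨hv, hau.trans huv.le⟩, fun y ⟨hy, hay⟩ => ?_⟩
      by_contra hyv
      exact (hbu ▸ huniq y hy hay hyv ▸ hy).not_lt huv
    · obtain ⟨c, huc, hc⟩ := exists_le_isMax (⟨u, huv.ne⟩ : ({v}ᶜ : Set P))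
      have hub : u < b := lt_of_le_of_ne (hb_uniq c ⟨hc, hau.trans huc⟩ ▸ huc) (Ne.symm hbu)
      have hb' := isMax_val_of_compl huv hbelow hb hbu
      obtain ⟨a₀, ha₀u, ha₀⟩ := exists_isMin_le u
      refine .inr (hasLonelyMin_dual_of_existsUnique hv huv hbelow ⟨a₀, ⟨ha₀, ha₀u⟩, ?_⟩)
      exact fun y ⟨hy, hyu⟩ =>
        eq_of_isMin_of_not_hasPencil hnp hy ha₀ hyu ha₀u hv hb' (Ne.symm b.2) huv hub
  · have hbu : (b : P) ≠ u := fun h => hau (h ▸ hab)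
    refine .inl ⟨a, ha', b, ⟨isMax_val_of_compl huv hbelow hb hbu, hab⟩, fun y ⟨hy, hay⟩ => ?_⟩
    refine huniq y hy hay ?_
    rintro rfl
    exact hau ((ha'.le_iff_le_of_forall_lt_le huv hbelow).1 hay)

lemma hasLonelyMin_dual_of_compl (hv : IsMax v) (huv : u < v) (hbelow : ∀ t < v, t ≤ u)
    (h : HasLonelyMin ({v}ᶜ : Set P)ᵒᵈ) : HasLonelyMin Pᵒᵈ := by
  obtain ⟨b, hb, a, ⟨ha, hab⟩, ha_uniq⟩ := hasLonelyMin_dual_iff.1 h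
  have huniq : ∀ y : P, IsMin y → y ≤ b → y = a := fun y hy hyb =>
    congrArg Subtype.val (ha_uniq ⟨y, fun hyv => (hyv ▸ hy) huv.le |>.not_gt huv⟩
      ⟨fun _ ht => hy ht, hyb⟩)
  have ha' := isMin_val_of_compl hv ha
  by_cases hbu : (b : P) = u
  · exact hasLonelyMin_dual_of_existsUnique hv huv hbelow
      ⟨a, ⟨ha', hbu ▸ hab⟩, fun y ⟨hy, hyu⟩ => huniq y hy (hbu ▸ hyu)⟩
  · exact hasLonelyMin_dual_iff.2 ⟨b, isMax_val_of_compl huv hbelow hb hbu, a, ⟨ha', hab⟩,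
      fun y ⟨hy, hyb⟩ => huniq y hy hyb⟩

end Leaf

lemma IsTreePoset.hasLonelyMin_or_dual_of_leaf [Finite P] [Nontrivial P] (hP : IsTreePoset P)
    {u v : P} (huv : u ⋖ v) (hleaf : ∀ w, (hasse P).Adj v w → w = u)
    (ih : IsTreePoset ({v}ᶜ : Set P) →
      HasLonelyMin ({v}ᶜ : Set P) ∨ HasLonelyMin ({v}ᶜ : Set P)ᵒᵈ) :
    HasLonelyMin P ∨ HasLonelyMin Pᵒᵈ := by
  have hv := isMax_of_leaf huv hleaf
  have hbelow : ∀ t < v, t ≤ u := fun _ => le_of_lt_of_leaf hleaf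
  rcases ih (hP.compl_singleton hv fun w hw w' hw' => (hleaf w hw).trans (hleaf w' hw').symm)
    with h | h
  · exact hasLonelyMin_or_dual_of_compl hP.2 hv huv.lt hbelow h
  · exact .inr (hasLonelyMin_dual_of_compl hv huv.lt hbelow h)

theorem IsTreePoset.hasLonelyMin_or_dual [Finite P] (hP : IsTreePoset P) :
    HasLonelyMin P ∨ HasLonelyMin Pᵒᵈ := by
  revert ‹PartialOrder P›
  induction P using Finite.induction_subsingleton_or_nontrivial with
  | hbase P =>
    intro _ hP
    obtain ⟨x⟩ := hP.1.connected.nonempty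
    exact .inl ⟨x, Subsingleton.isMin x, x, ⟨Subsingleton.isMax x, le_rfl⟩,
      fun y _ => Subsingleton.elim y x⟩
  | hstep P ih =>
    intro _ hP
    classical
    have := Fintype.ofFinite P
    obtain ⟨v, hv⟩ := hP.1.exists_vert_degree_one_of_nontrivial
    obtain ⟨u, hvu, hleaf⟩ := SimpleGraph.degree_eq_one_iff_existsUnique_adj.1 hv
    rcases hasse_adj.1 hvu with hvu | huv
    · have : Finite Pᵒᵈ := ‹Finite P›
      have hcard : Nat.card ({toDual v}ᶜ : Set Pᵒᵈ) < Nat.card P :=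
        Finite.card_subtype_lt (α := Pᵒᵈ) (not_not.2 rfl)
      refine (hP.dual.hasLonelyMin_or_dual_of_leaf (u := toDual u) (v := toDual v)
        (toDual_covBy_toDual_iff.2 hvu) (fun w hw => ?_) (ih _ hcard)).symm
      rw [← toDual_ofDual w, hasse_adj, toDual_covBy_toDual_iff, toDual_covBy_toDual_iff,
        or_comm, ← hasse_adj] at hw
      exact congrArg toDual (hleaf _ hw)
    · exact hP.hasLonelyMin_or_dual_of_leaf huv hleaf
        (ih _ (Finite.card_subtype_lt (not_not.2 rfl)))

end

/-- In a tree poset there is a maximal saturated chain whose top or bottom element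
lies in no other maximal saturated chain. -/
theorem treePoset_exists_private_chain (P : Type) [PartialOrder P] [Fintype P]
    (hP : IsTreePoset P) :
    ∃ l : List P, IsMaxSatChain l ∧
      ((∃ b, l.getLast? = some b ∧ ∀ l', IsMaxSatChain l' → b ∈ l' → l' = l) ∨
       (∃ a, l.head? = some a ∧ ∀ l', IsMaxSatChain l' → a ∈ l' → l' = l)) := by
  rcases hP.hasLonelyMin_or_dual with ⟨a, ha, huniq⟩ | hdual
  · obtain ⟨l, hl, hhead, hpriv⟩ :=
      exists_private_isMaxSatChain_of_isMin hP.1.isAcyclic ha huniq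
    exact ⟨l, hl, .inr ⟨a, hhead, hpriv⟩⟩
  · obtain ⟨b, hb, huniq⟩ := hasLonelyMin_dual_iff.1 hdual
    obtain ⟨l, hl, hlast, hpriv⟩ :=
      exists_private_isMaxSatChain_of_isMax hP.1.isAcyclic hb huniq
    exact ⟨l, hl, .inl ⟨b, hlast, hpriv⟩⟩
end
end

section
/- Let P be a tree poset, t ≥ 2, and x_{i_1},…,x_{i_t} a saturated chain in P such that x_{i_t} is a maximal element of P contained in a unique maximal saturated chain. Then the set {x_{i_1},…,x_{i_t}} is a leaf of the simplicial complex Δ_t(P) whose facets are the vertex sets of saturated chains of length t in P. -/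
/-!
If `b` lies on a unique maximal saturated chain `c`, then each entry of `c` has its predecessor in
`c` as its only lower cover: any other lower cover would extend down to a minimal element and give
a second maximal chain through `b`. Hence the part of a saturated chain up to an entry `x` of `c`
is a final segment of `c` up to `x`. So `l` is the top segment of `c` and the only facet
containing `b`. Let `x` be the largest element of `l` lying in some other facet `H`: gluing `c`
below `x` to `H` above `x` gives a saturated chain with at least `t` elements, a window of which
is a facet avoiding `b` that contains every element of `l` below `x`, hence every intersection of
`l` with another facet.
-/

open MvPolynomial

noncomputable section
/-- `F` is a leaf of the family of facets `𝓕`: either `F` is the only facet, or there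
is a facet `G ≠ F` with `F ∩ H ⊆ F ∩ G` for every facet `H ≠ F`. -/
def IsLeafOf {V : Type*} [DecidableEq V] (F : Finset V) (𝓕 : Set (Finset V)) : Prop :=
  F ∈ 𝓕 ∧ (𝓕 = {F} ∨ ∃ G ∈ 𝓕, G ≠ F ∧ ∀ H ∈ 𝓕, H ≠ F → F ∩ H ⊆ F ∩ G)

/-- Connectivity of a simplicial complex, expressed on its family of facets. -/
def FacetsConnected {V : Type*} [DecidableEq V] (𝓕 : Set (Finset V)) : Prop :=
  ∀ F ∈ 𝓕, ∀ G ∈ 𝓕,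
    Relation.ReflTransGen (fun A B => A ∈ 𝓕 ∧ B ∈ 𝓕 ∧ (A ∩ B).Nonempty) F G

/-- A simplicial forest (given by its family of facets): every nonempty subfamily
of the facets has a leaf. -/
def IsSimplicialForest {V : Type*} [DecidableEq V] (𝓕 : Set (Finset V)) : Prop :=
  ∀ 𝓖 ⊆ 𝓕, 𝓖.Nonempty → ∃ F, IsLeafOf F 𝓖

/-- A simplicial tree: a connected simplicial forest. -/
def IsSimplicialTree {V : Type*} [DecidableEq V] (𝓕 : Set (Finset V)) : Prop :=
  FacetsConnected 𝓕 ∧ IsSimplicialForest 𝓕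

/-- The facets of the facet complex `Δ_t(P)` of the path ideal: the vertex sets of
saturated chains with `t` elements. -/
def pathFacets (P : Type) [PartialOrder P] [DecidableEq P] (t : ℕ) : Set (Finset P) :=
  {s | ∃ l : List P, l.length = t ∧ IsSatChain l ∧ s = l.toFinset}

theorem List.IsInfix.exists_infix_length_eq {α : Type*} {s c : List α} {n : ℕ}
    (hs : s <:+: c) (hsn : s.length ≤ n) (hnc : n ≤ c.length) :
    ∃ w, s <:+: w ∧ w <:+: c ∧ w.length = n := by
  obtain ⟨p, q, rfl⟩ := hs
  simp only [List.length_append] at hnc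
  by_cases hq : n - s.length ≤ q.length
  · refine ⟨s ++ q.take (n - s.length), List.infix_append_left, ?_, by simp; omega⟩
    exact ⟨p, q.drop (n - s.length), by simp⟩
  · set k := p.length - (n - s.length - q.length)
    refine ⟨p.drop k ++ s ++ q, List.infix_append _ _ _, ⟨p.take k, [], ?_⟩, ?_⟩
    · rw [List.append_nil, ← List.append_assoc, ← List.append_assoc, List.take_append_drop]
    simp only [List.length_append, List.length_drop]
    omega

section SaturatedChains

variable {P : Type*} [PartialOrder P]

lemma IsSatChain.pairwise_lt_s6 {l : List P} (h : IsSatChain l) : l.Pairwise (· < ·) :=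
  List.isChain_iff_pairwise.mp (List.IsChain.imp (fun _ _ h => h.lt) h)

lemma IsSatChain.infix {l l' : List P} (h : IsSatChain l) (h' : l' <:+: l) : IsSatChain l' :=
  List.IsChain.infix h h'

lemma IsSatChain.isChain_toFinset [DecidableEq P] {l : List P} (h : IsSatChain l) :
    IsChain (· ≤ ·) (l.toFinset : Set P) := by
  intro x hx y hy hxy
  simp only [Finset.mem_coe, List.mem_toFinset] at hx hy
  have : Std.Symm fun a b : P => a ≤ b ∨ b ≤ a := ⟨fun _ _ => Or.symm⟩
  have hR : l.Pairwise fun a b : P => a ≤ b ∨ b ≤ a := h.pairwise_lt_s6.imp fun hab => Or.inl hab.le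
  exact hR.forall hx hy hxy

lemma IsSatChain.le_of_mem_concat {c : List P} {x y : P} (h : IsSatChain (c ++ [x]))
    (hy : y ∈ c ++ [x]) : y ≤ x := by
  rcases List.mem_append.mp hy with hy | hy
  · exact (List.pairwise_append.mp h.pairwise_lt_s6).2.2 y hy x (List.mem_singleton_self x) |>.le
  · exact (List.mem_singleton.mp hy).le

lemma IsSatChain.getLast?_eq_of_isMax_s6 {c : List P} {b : P} (hc : IsSatChain c) (hb : b ∈ c)
    (hmax : IsMax b) : c.getLast? = some b := by
  obtain ⟨c₁, c₂, rfl⟩ := List.append_of_mem hb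
  cases c₂ with
  | nil => simp
  | cons z c₂ => exact absurd (List.isChain_append_cons_cons.mp hc).2.1.lt hmax.not_lt

theorem exists_isSatChain_concat_isMin [WellFoundedLT P] [IsStronglyCoatomic P] (y : P) :
    ∃ m, IsSatChain (m ++ [y]) ∧ ∃ a, (m ++ [y]).head? = some a ∧ IsMin a := by
  induction y using WellFoundedLT.induction with
  | _ y ih =>
  by_cases hy : IsMin y
  · exact ⟨[], List.isChain_singleton y, y, rfl, hy⟩
  obtain ⟨w, hwy⟩ := not_isMin_iff.mp hy
  obtain ⟨z, -, hzy⟩ := exists_le_covBy_of_lt hwy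
  obtain ⟨m, hm, a, ha, hamin⟩ := ih z hzy.lt
  refine ⟨m ++ [z], List.IsChain.append hm (List.isChain_singleton y) ?_, a, ?_, hamin⟩
  · simp only [List.getLast?_append, List.getLast?_singleton, Option.some_or, Option.mem_def,
      Option.some_inj, List.head?_cons, forall_eq']
    exact hzy
  · simpa [List.head?_append] using ha

end SaturatedChains

section UniqueLowerCovers

variable {P : Type*} [PartialOrder P]

def UniqueLowerCovers (c : List P) : Prop :=
  ∀ c₁ x c₂ y, c = c₁ ++ x :: c₂ → y ⋖ x → ∃ c₀, c₁ = c₀ ++ [y]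

theorem uniqueLowerCovers_of_forall_eq [WellFoundedLT P] [IsStronglyCoatomic P]
    {c : List P} {b : P} (hc : IsSatChain c) (hcb : c.getLast? = some b) (hb : IsMax b)
    (huniq : ∀ c', IsMaxSatChain c' → b ∈ c' → c' = c) : UniqueLowerCovers c := by
  rintro c₁ x c₂ y rfl hyx
  obtain ⟨m, hm, a, ha, hamin⟩ := exists_isSatChain_concat_isMin y
  have hsat : IsSatChain (m ++ [y] ++ x :: c₂) :=
    List.IsChain.append_overlap hm (List.isChain_cons_cons.mpr ⟨hyx, hc.right_of_append⟩)
      (List.cons_ne_nil y [])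
  have hlast : (m ++ [y] ++ x :: c₂).getLast? = some b := by
    simpa [List.getLast?_append] using hcb
  have hmax : IsMaxSatChain (m ++ [y] ++ x :: c₂) :=
    ⟨hsat, ⟨a, by simpa [List.head?_append] using ha, hamin⟩, ⟨b, hlast, hb⟩⟩
  exact ⟨m, (List.append_cancel_right (huniq _ hmax (List.mem_of_getLast? hlast))).symm⟩

theorem UniqueLowerCovers.suffix {c c₁ c₂ h : List P} {x : P} (hc : UniqueLowerCovers c)
    (hcx : c = c₁ ++ x :: c₂) (hh : IsSatChain (h ++ [x])) : h ++ [x] <:+ c₁ ++ [x] := by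
  induction h using List.reverseRecOn generalizing c₁ c₂ x with
  | nil => exact List.suffix_append c₁ [x]
  | append_singleton h y ih =>
    have hyx : y ⋖ x := by
      have hh' : IsSatChain (h ++ [y, x]) := by
        simpa only [List.append_assoc, List.cons_append, List.nil_append] using hh
      exact (List.isChain_append_cons_cons.mp hh').2.1
    obtain ⟨c₀, rfl⟩ := hc c₁ x c₂ y hcx hyx
    exact List.suffix_append_self_iff.mpr
      (ih (c₁ := c₀) (c₂ := x :: c₂) (by simp [hcx]) (List.IsChain.left_of_append hh))

theorem UniqueLowerCovers.suffix_of_getLast?_eq {c h : List P} {b : P}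
    (hc : UniqueLowerCovers c) (hh : IsSatChain h) (hhb : h.getLast? = some b)
    (hcb : c.getLast? = some b) : h <:+ c := by
  obtain ⟨h₀, rfl⟩ := List.getLast?_eq_some_iff.mp hhb
  obtain ⟨c₀, rfl⟩ := List.getLast?_eq_some_iff.mp hcb
  exact hc.suffix (c₂ := []) rfl hh

theorem UniqueLowerCovers.exists_isSatChain_of_mem_of_mem {c l h : List P} {x : P}
    (hc : UniqueLowerCovers c) (hcsat : IsSatChain c) (hlc : l <:+ c) (hh : IsSatChain h)
    (hlen : l.length ≤ h.length) (hxl : x ∈ l) (hxh : x ∈ h) :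
    ∃ w, IsSatChain w ∧ w.length = h.length ∧ (∀ y ∈ l, y ≤ x → y ∈ w) ∧
      ∀ z ∈ w, z ≤ x ∨ z ∈ h := by
  obtain ⟨l₁, l₂, rfl⟩ := List.append_of_mem hxl
  obtain ⟨h₁, h₂, rfl⟩ := List.append_of_mem hxh
  obtain ⟨p, rfl⟩ := hlc
  have hpre : IsSatChain (p ++ l₁ ++ [x]) := hcsat.infix ⟨[], l₂, by simp⟩
  have hsuf : h₁ ++ [x] <:+ p ++ l₁ ++ [x] :=
    hc.suffix (List.append_assoc _ _ _).symm (hh.infix ⟨[], h₂, by simp⟩)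
  have hL : IsSatChain (p ++ l₁ ++ [x] ++ h₂) :=
    List.IsChain.append_overlap hpre (hh.infix List.infix_append_right) (List.cons_ne_nil _ _)
  have hseg : l₁ ++ [x] <:+: p ++ l₁ ++ [x] ++ h₂ := ⟨p, h₂, by simp⟩
  obtain ⟨w, hsw, hwL, hwlen⟩ := hseg.exists_infix_length_eq (n := (h₁ ++ x :: h₂).length)
    (by simp only [List.length_append, List.length_cons, List.length_nil] at hlen ⊢; omega)
    (by
      have := hsuf.length_le
      simp only [List.length_append, List.length_cons, List.length_nil] at this ⊢
      omega)
  refine ⟨w, hL.infix hwL, hwlen, fun y hy hyx => hsw.subset ?_, fun z hz => ?_⟩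
  · rcases List.mem_append.mp hy with hy | hy
    · exact List.mem_append_left _ hy
    rcases List.mem_cons.mp hy with rfl | hy
    · exact List.mem_append_right _ (List.mem_singleton_self y)
    have hxy : x < y :=
      List.rel_of_pairwise_cons (hcsat.infix ⟨p ++ l₁, [], by simp⟩).pairwise_lt_s6 hy
    exact absurd hyx hxy.not_ge
  · rcases List.mem_append.mp (hwL.subset hz) with hz | hz
    · exact .inl (hpre.le_of_mem_concat hz)
    · exact .inr (List.mem_append_right _ (List.mem_cons_of_mem x hz))

end UniqueLowerCovers

theorem isLeafOf_of_isChain {V : Type*} [DecidableEq V] [PartialOrder V] {F : Finset V}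
    {𝓕 : Set (Finset V)} (hF : F ∈ 𝓕) (hchain : IsChain (· ≤ ·) (F : Set V))
    (h : ∀ H ∈ 𝓕, H ≠ F → ∀ x ∈ F ∩ H, ∃ G ∈ 𝓕, G ≠ F ∧ ∀ y ∈ F, y ≤ x → y ∈ G) :
    IsLeafOf F 𝓕 := by
  classical
  refine ⟨hF, or_iff_not_imp_left.mpr fun hsingle => ?_⟩
  obtain ⟨H₀, hH₀, hH₀F⟩ : ∃ H ∈ 𝓕, H ≠ F := by
    by_contra! hall
    exact hsingle (Set.eq_singleton_iff_unique_mem.mpr ⟨hF, hall⟩)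
  set U := F.filter fun x => ∃ H ∈ 𝓕, H ≠ F ∧ x ∈ H
  have hmemU : ∀ H ∈ 𝓕, H ≠ F → ∀ y ∈ F ∩ H, y ∈ U := fun H hH hHF y hy =>
    Finset.mem_filter.mpr ⟨(Finset.mem_inter.mp hy).1, H, hH, hHF, (Finset.mem_inter.mp hy).2⟩
  rcases U.eq_empty_or_nonempty with hU | hU
  · refine ⟨H₀, hH₀, hH₀F, fun H hH hHF y hy => ?_⟩
    simpa [hU] using hmemU H hH hHF y hy
  obtain ⟨x, hxmax⟩ := U.exists_maximal hU
  obtain ⟨hxF, H, hH, hHF, hxH⟩ := Finset.mem_filter.mp hxmax.prop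
  obtain ⟨G, hG, hGF, hFG⟩ := h H hH hHF x (Finset.mem_inter.mpr ⟨hxF, hxH⟩)
  refine ⟨G, hG, hGF, fun H' hH' hH'F y hy => ?_⟩
  have hyF := (Finset.mem_inter.mp hy).1
  have hyx : y ≤ x := (hchain.total hyF hxF).elim id (hxmax.2 (hmemU H' hH' hH'F y hy))
  exact Finset.mem_inter.mpr ⟨hyF, hFG y hyF hyx⟩

theorem treePoset_chain_isLeaf_general (P : Type) [PartialOrder P] [Fintype P] [DecidableEq P]
    (t : ℕ) (l : List P)
    (hlen : l.length = t) (hc : IsSatChain l)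
    (htop : ∃ b, l.getLast? = some b ∧ IsMax b ∧
      ∃ c, IsMaxSatChain c ∧ b ∈ c ∧ ∀ c', IsMaxSatChain c' → b ∈ c' → c' = c) :
    IsLeafOf l.toFinset (pathFacets P t) := by
  obtain ⟨b, hlb, hb, c, hcmax, hbc, huniq⟩ := htop
  have hcb : c.getLast? = some b := hcmax.1.getLast?_eq_of_isMax_s6 hbc hb
  have hU : UniqueLowerCovers c := uniqueLowerCovers_of_forall_eq hcmax.1 hcb hb huniq
  have hlc : l <:+ c := hU.suffix_of_getLast?_eq hc hlb hcb
  have heq : ∀ h, IsSatChain h → h.length = t → b ∈ h → h = l := fun h hh hht hbh =>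
    have hhc := hU.suffix_of_getLast?_eq hh (hh.getLast?_eq_of_isMax_s6 hbh hb) hcb
    (List.suffix_of_suffix_length_le hhc hlc (by omega)).eq_of_length (by omega)
  refine isLeafOf_of_isChain ⟨l, hlen, hc, rfl⟩ hc.isChain_toFinset ?_
  rintro _ ⟨h, hht, hh, rfl⟩ hne x hx
  rw [Finset.mem_inter, List.mem_toFinset, List.mem_toFinset] at hx
  have hbh : b ∉ h := fun hbh => hne (by rw [heq h hh hht hbh])
  obtain ⟨w, hw, hwlen, hlw, hwh⟩ :=
    hU.exists_isSatChain_of_mem_of_mem hcmax.1 hlc hh (by omega) hx.1 hx.2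
  refine ⟨w.toFinset, ⟨w, by omega, hw, rfl⟩, fun hwl => ?_, fun y hy hyx => ?_⟩
  · have hbw : b ∈ w := by
      rw [← List.mem_toFinset, hwl, List.mem_toFinset]
      exact List.mem_of_getLast? hlb
    rcases hwh b hbw with hbx | hbh'
    · exact hbh (hb.eq_of_le hbx ▸ hx.2)
    · exact hbh hbh'
  · exact List.mem_toFinset.mpr (hlw y (List.mem_toFinset.mp hy) hyx)

/-- If the top of a saturated chain of length `t` in a tree poset is a maximal element
lying in a unique maximal chain, then the chain is a leaf of `Δ_t(P)`. -/
theorem treePoset_chain_isLeaf (P : Type) [PartialOrder P] [Fintype P] [DecidableEq P]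
    (hP : IsTreePoset P) (t : ℕ) (ht : 2 ≤ t) (l : List P)
    (hlen : l.length = t) (hc : IsSatChain l)
    (htop : ∃ b, l.getLast? = some b ∧ IsMax b ∧
      ∃ c, IsMaxSatChain c ∧ b ∈ c ∧ ∀ c', IsMaxSatChain c' → b ∈ c' → c' = c) :
    IsLeafOf l.toFinset (pathFacets P t) :=
  treePoset_chain_isLeaf_general P t l hlen hc htop
end
end
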